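/- arXiv:1605.00131 — 2 statements merged into one kernel-verified Lean document; each statement's English description precedes it below -/
import Mathlib

section
/- As ε → 0⁺, the quantity ∫₀¹ f(s)^{1−2ε} ds is asymptotically equivalent to 1/(4ε); that is, the limit as ε → 0⁺ of (4ε) · ∫₀¹ f(s)^{1−2ε} ds equals 1. -/
open Filter

noncomputable def f (t : ℝ) : ℝ := if t ≤ 1 / 2 then 1 / (2 * t) else 2 * (1 - t)

/-! For `-1 < p < 1`, `f ^ p` is `(2s)^(-p)` on `(0, 1/2]` and `(2 - 2s)^p` on `(1/2, 1]`, so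
`∫₀¹ f^p = 1/(2(1-p)) + 1/(2(1+p))`. At `p = 1 - 2ε` the first term is `1/(4ε)` and the second
stays bounded, whence `4ε ∫₀¹ f^(1-2ε) = 1 + ε/(1-ε) → 1`. -/

open Set MeasureTheory intervalIntegral Topology
open scoped Interval

lemma rpow_f_eqOn_left (p : ℝ) :
    EqOn (fun s => f s ^ p) (fun s => (2 * s) ^ (-p)) (Ι 0 (1 / 2)) := by
  rintro s ⟨hs0, hs1⟩
  simp only [min_eq_left (by norm_num : (0 : ℝ) ≤ 1 / 2),
    max_eq_right (by norm_num : (0 : ℝ) ≤ 1 / 2)] at hs0 hs1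
  dsimp only
  rw [f, if_pos hs1, one_div, Real.inv_rpow (by positivity), Real.rpow_neg (by positivity)]

lemma rpow_f_eqOn_right (p : ℝ) :
    EqOn (fun s => f s ^ p) (fun s => (2 - 2 * s) ^ p) (Ι (1 / 2) 1) := by
  rintro s ⟨hs0, -⟩
  simp only [min_eq_left (by norm_num : (1 / 2 : ℝ) ≤ 1)] at hs0
  dsimp only
  rw [f, if_neg hs0.not_ge, mul_one_sub]

lemma integral_rpow_two_mul {p : ℝ} (hp : p < 1) :
    ∫ s in (0 : ℝ)..(1 / 2), (2 * s) ^ (-p) = 1 / (2 * (1 - p)) := by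
  rw [integral_comp_mul_left (fun s => s ^ (-p)) two_ne_zero,
    integral_rpow (Or.inl (by linarith))]
  norm_num [Real.zero_rpow (by linarith : -p + 1 ≠ 0)]
  ring

lemma integral_rpow_two_sub_two_mul {p : ℝ} (hp : -1 < p) :
    ∫ s in (1 / 2 : ℝ)..1, (2 - 2 * s) ^ p = 1 / (2 * (1 + p)) := by
  rw [integral_comp_sub_mul (fun s => s ^ p) two_ne_zero, integral_rpow (Or.inl hp)]
  norm_num [Real.zero_rpow (by linarith : p + 1 ≠ 0)]
  ring

lemma integral_rpow_f_left {p : ℝ} (hp : p < 1) :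
    ∫ s in (0 : ℝ)..(1 / 2), f s ^ p = 1 / (2 * (1 - p)) := by
  rw [integral_congr_ae (.of_forall fun s hs => rpow_f_eqOn_left p hs),
    integral_rpow_two_mul hp]

lemma integral_rpow_f_right {p : ℝ} (hp : -1 < p) :
    ∫ s in (1 / 2 : ℝ)..1, f s ^ p = 1 / (2 * (1 + p)) := by
  rw [integral_congr_ae (.of_forall fun s hs => rpow_f_eqOn_right p hs),
    integral_rpow_two_sub_two_mul hp]

lemma integral_Ioc_rpow_f {p : ℝ} (hp₁ : -1 < p) (hp₂ : p < 1) :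
    ∫ s in Ioc (0 : ℝ) 1, f s ^ p = 1 / (2 * (1 - p)) + 1 / (2 * (1 + p)) := by
  have hleft := integral_rpow_f_left hp₂
  have hright := integral_rpow_f_right hp₁
  -- both pieces are integrable because their integrals are nonzero
  have hint_left := intervalIntegrable_of_integral_ne_zero <| by
    rw [hleft]; exact one_div_ne_zero (by linarith)
  have hint_right := intervalIntegrable_of_integral_ne_zero <| by
    rw [hright]; exact one_div_ne_zero (by linarith)
  rw [← integral_of_le zero_le_one, ← integral_add_adjacent_intervals hint_left hint_right,
    hleft, hright]

/-- As `ε → 0⁺`, `∫₀¹ f(s)^{1-2ε} ds ∼ 1/(4ε)`: the limit as `ε → 0⁺` of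
`(4ε) · ∫₀¹ f(s)^{1-2ε} ds` equals `1`. -/
theorem stmt_4 :
    Tendsto (fun ε : ℝ => 4 * ε * ∫ s in Set.Ioc (0 : ℝ) 1, f s ^ (1 - 2 * ε))
      (nhdsWithin 0 (Set.Ioi 0)) (nhds 1) := by
  have hclosed : ∀ᶠ ε in 𝓝[>] (0 : ℝ),
      1 + ε / (1 - ε) = 4 * ε * ∫ s in Ioc (0 : ℝ) 1, f s ^ (1 - 2 * ε) := by
    filter_upwards [Ioo_mem_nhdsGT (by norm_num : (0 : ℝ) < 1 / 2)] with ε ⟨hε₀, hε₁⟩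
    have h1ε : 1 - ε ≠ 0 := by linarith
    rw [integral_Ioc_rpow_f (by linarith) (by linarith), sub_sub_cancel,
      show 1 + (1 - 2 * ε) = 2 * (1 - ε) by ring]
    field_simp
    ring
  have hlim : Tendsto (fun ε : ℝ => 1 + ε / (1 - ε)) (𝓝[>] 0) (𝓝 1) := by
    have hcont : ContinuousAt (fun ε : ℝ => 1 + ε / (1 - ε)) 0 :=
      continuousAt_const.add (continuousAt_id.div (by fun_prop) (by norm_num))
    simpa using hcont.tendsto.mono_left nhdsWithin_le_nhds
  exact hlim.congr' hclosed
end

section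
/- For every ε with 0 < ε < 1/2, the kernel k_ε is square-integrable on the unit square [0,1]², and its L² norm satisfies (∫₀¹∫₀¹ k_ε(s,t)² ds dt)^{1/2} ≤ ∫₀¹ f(s)^{1−2ε} ds. Consequently the integral operator K_ε on L²([0,1]) with kernel k_ε is a Hilbert–Schmidt (in particular, bounded) operator. -/
/-!
Since `⌊xy⌋ ≤ xy`, on `[0,1]²` the kernel satisfies `0 ≤ k_ε(s,t) ≤ φ(s) φ(t)` with
`φ = f^{(1-2ε)/2}`, and `φ² = f^{1-2ε}` is integrable: it is `(2s)^{2ε-1}` on `(0,1/2]` and at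
most `1` on `(1/2,1]`. Any kernel dominated by `φ ⊗ ψ` with `φ, ψ ∈ L²` has `k² ≤ φ² ⊗ ψ²`, which
gives square-integrability and the bound `∫∫ k² ≤ ‖φ‖² ‖ψ‖²` by Fubini; and Cauchy–Schwarz in `t`
gives `|(Kg)(s)| ≤ ‖ψ‖ ‖g‖ |φ(s)|`, so `K` maps `L²` boundedly into `L²`.
-/

open MeasureTheory

/-- For `ε > 0`, the kernel `k_ε(s,t) = f(s)^{-1/2-ε} ⌊f(s)f(t)⌋ f(t)^{-1/2-ε}`. -/
noncomputable def kε (ε : ℝ) (s t : ℝ) : ℝ :=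
  f s ^ (-(1 / 2 : ℝ) - ε) * (⌊f s * f t⌋ : ℝ) * f t ^ (-(1 / 2 : ℝ) - ε)

section IntegralKernel

variable {α : Type*} [MeasurableSpace α] {μ : Measure α}

theorem integral_norm_mul_norm_le {f g : α → ℝ} (hf : MemLp f 2 μ) (hg : MemLp g 2 μ) :
    ∫ a, ‖f a‖ * ‖g a‖ ∂μ ≤ (eLpNorm f 2 μ).toReal * (eLpNorm g 2 μ).toReal := by
  have h2 : ENNReal.ofReal 2 = 2 := by norm_num
  have := integral_mul_norm_le_Lp_mul_Lq Real.HolderConjugate.two_two (h2 ▸ hf) (h2 ▸ hg)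
  rw [hf.eLpNorm_eq_integral_rpow_norm two_ne_zero ENNReal.ofNat_ne_top,
    hg.eLpNorm_eq_integral_rpow_norm two_ne_zero ENNReal.ofNat_ne_top,
    ENNReal.toReal_ofReal (by positivity), ENNReal.toReal_ofReal (by positivity),
    ENNReal.toReal_ofNat]
  simpa only [one_div] using this

variable {β : Type*} [MeasurableSpace β] {ν : Measure β} {k : α → β → ℝ} {φ : α → ℝ} {ψ : β → ℝ}

section Slice

variable {κ : β → ℝ} {c : ℝ} {g : β → ℝ}

theorem integrable_mul_of_norm_le_mul_norm (hκ : AEStronglyMeasurable κ ν) (hψ : MemLp ψ 2 ν)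
    (hκψ : ∀ᵐ t ∂ν, ‖κ t‖ ≤ c * ‖ψ t‖) (hg : MemLp g 2 ν) :
    Integrable (fun t => κ t * g t) ν :=
  ((hψ.norm.integrable_mul hg.norm).const_mul c).mono' (hκ.mul hg.1) <| by
    filter_upwards [hκψ] with t ht
    rw [norm_mul, Pi.mul_apply, ← mul_assoc]
    exact mul_le_mul_of_nonneg_right ht (norm_nonneg _)

theorem norm_integral_mul_le_of_norm_le_mul_norm (hc : 0 ≤ c) (hψ : MemLp ψ 2 ν)
    (hκψ : ∀ᵐ t ∂ν, ‖κ t‖ ≤ c * ‖ψ t‖) (hg : MemLp g 2 ν) :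
    ‖∫ t, κ t * g t ∂ν‖ ≤ c * ((eLpNorm ψ 2 ν).toReal * (eLpNorm g 2 ν).toReal) := by
  calc ‖∫ t, κ t * g t ∂ν‖ ≤ ∫ t, c * (‖ψ t‖ * ‖g t‖) ∂ν := by
        refine norm_integral_le_of_norm_le ((hψ.norm.integrable_mul hg.norm).const_mul c) ?_
        filter_upwards [hκψ] with t ht
        rw [norm_mul, ← mul_assoc]
        exact mul_le_mul_of_nonneg_right ht (norm_nonneg _)
    _ ≤ _ := by
        rw [integral_const_mul]
        exact mul_le_mul_of_nonneg_left (integral_norm_mul_norm_le hψ hg) hc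

theorem integral_mul_Lp_smul (c : ℝ) (g : Lp ℝ 2 ν) :
    ∫ t, κ t * (c • g : Lp ℝ 2 ν) t ∂ν = c • ∫ t, κ t * g t ∂ν := by
  rw [← integral_smul]
  refine integral_congr_ae ?_
  filter_upwards [Lp.coeFn_smul c g] with t ht
  rw [ht, Pi.smul_apply, smul_eq_mul, smul_eq_mul, mul_left_comm]

end Slice

theorem sq_le_sq_mul_sq_of_norm_le_mul {x a b : ℝ} (h : ‖x‖ ≤ a * b) : x ^ 2 ≤ a ^ 2 * b ^ 2 := by
  rw [← mul_pow, ← sq_abs]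
  exact pow_le_pow_left₀ (abs_nonneg x) h 2

theorem integrable_sq_of_norm_le_mul [SFinite ν]
    (hk : AEStronglyMeasurable (Function.uncurry k) (μ.prod ν))
    (hφ : MemLp φ 2 μ) (hψ : MemLp ψ 2 ν)
    (hkφψ : ∀ᵐ p ∂μ.prod ν, ‖k p.1 p.2‖ ≤ φ p.1 * ψ p.2) :
    Integrable (fun p : α × β => k p.1 p.2 ^ 2) (μ.prod ν) := by
  refine (hφ.integrable_sq.mul_prod hψ.integrable_sq).mono' (hk.pow 2) ?_
  filter_upwards [hkφψ] with p hp
  rw [Real.norm_eq_abs, abs_of_nonneg (sq_nonneg _)]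
  exact sq_le_sq_mul_sq_of_norm_le_mul hp

theorem integral_sq_le_of_norm_le_mul [SFinite μ] [SFinite ν]
    (hφ : MemLp φ 2 μ) (hψ : MemLp ψ 2 ν)
    (hkφψ : ∀ᵐ p ∂μ.prod ν, ‖k p.1 p.2‖ ≤ φ p.1 * ψ p.2) :
    ∫ p, k p.1 p.2 ^ 2 ∂μ.prod ν ≤ (∫ s, φ s ^ 2 ∂μ) * ∫ t, ψ t ^ 2 ∂ν := by
  rw [← integral_prod_mul]
  refine integral_mono_of_nonneg (ae_of_all _ fun p => sq_nonneg _)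
    (hφ.integrable_sq.mul_prod hψ.integrable_sq) ?_
  filter_upwards [hkφψ] with p hp
  exact sq_le_sq_mul_sq_of_norm_le_mul hp

theorem ae_slice_aestronglyMeasurable_and_norm_le [SFinite ν]
    (hk : AEStronglyMeasurable (Function.uncurry k) (μ.prod ν))
    (hkφψ : ∀ᵐ p ∂μ.prod ν, ‖k p.1 p.2‖ ≤ φ p.1 * ψ p.2) :
    ∀ᵐ s ∂μ, AEStronglyMeasurable (k s) ν ∧ ∀ᵐ t ∂ν, ‖k s t‖ ≤ ‖φ s‖ * ‖ψ t‖ := by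
  filter_upwards [hk.prodMk_left, Measure.ae_ae_of_ae_prod hkφψ] with s hs hst
  refine ⟨hs, ?_⟩
  filter_upwards [hst] with t ht
  rw [← norm_mul]
  exact ht.trans (Real.le_norm_self _)

theorem ae_integral_kernel_add (hψ : MemLp ψ 2 ν)
    (hslice : ∀ᵐ s ∂μ, AEStronglyMeasurable (k s) ν ∧ ∀ᵐ t ∂ν, ‖k s t‖ ≤ ‖φ s‖ * ‖ψ t‖)
    (g h : Lp ℝ 2 ν) :
    (fun s => ∫ t, k s t * (g + h : Lp ℝ 2 ν) t ∂ν) =ᵐ[μ]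
      (fun s => ∫ t, k s t * g t ∂ν) + fun s => ∫ t, k s t * h t ∂ν := by
  filter_upwards [hslice] with s ⟨hs, hst⟩
  rw [Pi.add_apply, ← integral_add (integrable_mul_of_norm_le_mul_norm hs hψ hst (Lp.memLp g))
    (integrable_mul_of_norm_le_mul_norm hs hψ hst (Lp.memLp h))]
  refine integral_congr_ae ?_
  filter_upwards [Lp.coeFn_add g h] with t ht
  rw [ht, Pi.add_apply, mul_add]

theorem ae_norm_integral_kernel_le (hψ : MemLp ψ 2 ν)
    (hslice : ∀ᵐ s ∂μ, AEStronglyMeasurable (k s) ν ∧ ∀ᵐ t ∂ν, ‖k s t‖ ≤ ‖φ s‖ * ‖ψ t‖)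
    (g : Lp ℝ 2 ν) :
    ∀ᵐ s ∂μ, ‖∫ t, k s t * g t ∂ν‖ ≤ (eLpNorm ψ 2 ν).toReal * ‖g‖ * ‖φ s‖ := by
  filter_upwards [hslice] with s ⟨_, hst⟩
  rw [mul_comm, Lp.norm_def]
  exact norm_integral_mul_le_of_norm_le_mul_norm (norm_nonneg _) hψ hst (Lp.memLp g)

theorem exists_continuousLinearMap_integral_kernel_of_norm_le_mul [SFinite ν]
    (hk : AEStronglyMeasurable (Function.uncurry k) (μ.prod ν))
    (hφ : MemLp φ 2 μ) (hψ : MemLp ψ 2 ν)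
    (hkφψ : ∀ᵐ p ∂μ.prod ν, ‖k p.1 p.2‖ ≤ φ p.1 * ψ p.2) :
    ∃ K : Lp ℝ 2 ν →L[ℝ] Lp ℝ 2 μ, ∀ g : Lp ℝ 2 ν,
      K g =ᵐ[μ] fun s => ∫ t, k s t * g t ∂ν := by
  have hslice := ae_slice_aestronglyMeasurable_and_norm_le hk hkφψ
  have hK (g : Lp ℝ 2 ν) : MemLp (fun s => ∫ t, k s t * g t ∂ν) 2 μ :=
    hφ.of_le_mul (hk.mul (Lp.aestronglyMeasurable g).comp_snd).integral_prod_right'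
      (ae_norm_integral_kernel_le hψ hslice g)
  let K : Lp ℝ 2 ν →ₗ[ℝ] Lp ℝ 2 μ :=
    { toFun g := (hK g).toLp
      map_add' g h := by
        rw [← MemLp.toLp_add, MemLp.toLp_eq_toLp_iff]
        exact ae_integral_kernel_add hψ hslice g h
      map_smul' c g := by
        simp_rw [RingHom.id_apply, ← MemLp.toLp_const_smul, integral_mul_Lp_smul]
        rfl }
  refine ⟨K.mkContinuous ((eLpNorm ψ 2 ν).toReal * (eLpNorm φ 2 μ).toReal) fun g => ?_,
    fun g => (hK g).coeFn_toLp⟩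
  have hKg : K g = (hK g).toLp := rfl
  calc ‖K g‖ ≤ (eLpNorm ψ 2 ν).toReal * ‖g‖ * ‖hφ.toLp φ‖ := by
        refine Lp.norm_le_mul_norm_of_ae_le_mul ?_
        filter_upwards [(hK g).coeFn_toLp, hφ.coeFn_toLp, ae_norm_integral_kernel_le hψ hslice g]
          with s h₁ h₂ h₃
        rwa [hKg, h₁, h₂]
    _ = _ := by rw [Lp.norm_toLp]; ring

end IntegralKernel

theorem f_nonneg {s : ℝ} (hs : s ∈ Set.Icc (0 : ℝ) 1) : 0 ≤ f s := by
  unfold f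
  split_ifs
  · exact div_nonneg zero_le_one (by linarith [hs.1])
  · linarith [hs.2]

theorem measurable_f : Measurable f :=
  Measurable.ite measurableSet_Iic (by fun_prop) (by fun_prop)

theorem measurable_uncurry_kε (ε : ℝ) : Measurable (Function.uncurry (kε ε)) := by
  have hf₁ : Measurable fun p : ℝ × ℝ => f p.1 := measurable_f.comp measurable_fst
  have hf₂ : Measurable fun p : ℝ × ℝ => f p.2 := measurable_f.comp measurable_snd
  have hfloor : Measurable fun p : ℝ × ℝ => ((⌊f p.1 * f p.2⌋ : ℤ) : ℝ) :=
    measurable_from_top.comp (hf₁.mul hf₂).floor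
  unfold Function.uncurry kε
  fun_prop

theorem Real.rpow_div_two_sq {x : ℝ} (hx : 0 ≤ x) (a : ℝ) : (x ^ (a / 2)) ^ 2 = x ^ a := by
  rw [← Real.rpow_mul_natCast hx]
  norm_num

theorem abs_rpow_sub_one_mul_floor_mul_le {x y : ℝ} (hx : 0 ≤ x) (hy : 0 ≤ y) (a : ℝ) :
    |x ^ (a - 1) * ⌊x * y⌋ * y ^ (a - 1)| ≤ x ^ a * y ^ a := by
  rcases hx.eq_or_lt with rfl | hx
  · simp only [zero_mul, Int.floor_zero, Int.cast_zero, mul_zero, abs_zero]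
    positivity
  rcases hy.eq_or_lt with rfl | hy
  · simp only [mul_zero, Int.floor_zero, Int.cast_zero, zero_mul, abs_zero]
    positivity
  have hfloor : (0 : ℝ) ≤ ⌊x * y⌋ := Int.cast_nonneg (Int.floor_nonneg.2 (by positivity))
  rw [abs_of_nonneg (by positivity)]
  calc x ^ (a - 1) * ⌊x * y⌋ * y ^ (a - 1) ≤ x ^ (a - 1) * (x * y) * y ^ (a - 1) := by
        gcongr
        exact Int.floor_le _
    _ = x ^ a * y ^ a := by
        rw [Real.rpow_sub_one hx.ne', Real.rpow_sub_one hy.ne']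
        field_simp

theorem norm_kε_le (ε : ℝ) {s t : ℝ} (hs : s ∈ Set.Icc (0 : ℝ) 1) (ht : t ∈ Set.Icc (0 : ℝ) 1) :
    ‖kε ε s t‖ ≤ f s ^ ((1 - 2 * ε) / 2) * f t ^ ((1 - 2 * ε) / 2) := by
  have hexp : -(1 / 2 : ℝ) - ε = (1 - 2 * ε) / 2 - 1 := by ring
  rw [Real.norm_eq_abs, kε, hexp]
  exact abs_rpow_sub_one_mul_floor_mul_le (f_nonneg hs) (f_nonneg ht) _

theorem integrableOn_f_rpow {a : ℝ} (ha₀ : 0 ≤ a) (ha₁ : a < 1) :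
    IntegrableOn (fun s => f s ^ a) (Set.Icc 0 1) := by
  rw [integrableOn_Icc_iff_integrableOn_Ioc,
    ← Set.Ioc_union_Ioc_eq_Ioc (by norm_num : (0 : ℝ) ≤ 1 / 2) (by norm_num)]
  refine IntegrableOn.union ?_ ?_
  · have hpow : IntegrableOn (fun s : ℝ => 2 ^ (-a) * s ^ (-a)) (Set.Ioc 0 (1 / 2)) :=
      ((intervalIntegral.intervalIntegrable_rpow' (by linarith)).1).const_mul _
    refine hpow.congr_fun (fun s ⟨hs₀, hs₁⟩ => ?_) measurableSet_Ioc
    rw [f, if_pos hs₁, one_div, Real.inv_rpow (by positivity), ← Real.rpow_neg (by positivity),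
      Real.mul_rpow zero_le_two hs₀.le]
  · refine Measure.integrableOn_of_bounded (M := 1) (by simp)
      (measurable_f.pow_const a).aestronglyMeasurable ?_
    filter_upwards [ae_restrict_mem measurableSet_Ioc] with s ⟨hs₀, hs₁⟩
    have hfs : f s = 2 * (1 - s) := if_neg (by linarith)
    rw [hfs, Real.norm_eq_abs, abs_of_nonneg (by apply Real.rpow_nonneg; linarith)]
    exact Real.rpow_le_one (by linarith) (by linarith) ha₀

/-- For `0 < ε < 1/2`, the kernel `k_ε` is square-integrable on `[0,1]²`, its
`L²` norm satisfies `(∫₀¹∫₀¹ k_ε(s,t)² ds dt)^{1/2} ≤ ∫₀¹ f(s)^{1-2ε} ds`, and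
consequently the integral operator `K_ε` on `L²([0,1])` with kernel `k_ε` is a
Hilbert–Schmidt (in particular, bounded, i.e. continuous linear) operator. -/
theorem stmt_5 (ε : ℝ) (hε : ε ∈ Set.Ioo (0 : ℝ) (1 / 2)) :
    IntegrableOn (fun p : ℝ × ℝ => kε ε p.1 p.2 ^ 2)
        (Set.Icc (0 : ℝ) 1 ×ˢ Set.Icc (0 : ℝ) 1) ∧
      Real.sqrt (∫ p in Set.Icc (0 : ℝ) 1 ×ˢ Set.Icc (0 : ℝ) 1, kε ε p.1 p.2 ^ 2) ≤
        ∫ s in Set.Icc (0 : ℝ) 1, f s ^ (1 - 2 * ε) ∧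
      ∃ K : Lp ℝ 2 (volume.restrict (Set.Icc (0 : ℝ) 1)) →L[ℝ]
            Lp ℝ 2 (volume.restrict (Set.Icc (0 : ℝ) 1)),
        ∀ g : Lp ℝ 2 (volume.restrict (Set.Icc (0 : ℝ) 1)),
          ∀ᵐ s ∂(volume.restrict (Set.Icc (0 : ℝ) 1)),
            (K g : ℝ → ℝ) s = ∫ t in Set.Icc (0 : ℝ) 1, kε ε s t * (g : ℝ → ℝ) t := by
  set I := Set.Icc (0 : ℝ) 1
  set μ := volume.restrict I
  set φ : ℝ → ℝ := fun s => f s ^ ((1 - 2 * ε) / 2)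
  have hvol : volume.restrict (I ×ˢ I) = μ.prod μ := by
    rw [Measure.prod_restrict, ← Measure.volume_eq_prod]
  have hφ_sq : (fun s => φ s ^ 2) =ᵐ[μ] fun s => f s ^ (1 - 2 * ε) := by
    filter_upwards [ae_restrict_mem measurableSet_Icc] with s hs
    exact Real.rpow_div_two_sq (f_nonneg hs) _
  have hφ : MemLp φ 2 μ :=
    (memLp_two_iff_integrable_sq (measurable_f.pow_const _).aestronglyMeasurable).2 <|
      (integrableOn_f_rpow (by linarith [hε.2]) (by linarith [hε.1])).congr hφ_sq.symm
  have hk := (measurable_uncurry_kε ε).aestronglyMeasurable (μ := μ.prod μ)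
  have hkφ : ∀ᵐ p ∂μ.prod μ, ‖kε ε p.1 p.2‖ ≤ φ p.1 * φ p.2 := by
    rw [← hvol]
    filter_upwards [ae_restrict_mem (measurableSet_Icc.prod measurableSet_Icc)] with p hp
    exact norm_kε_le ε hp.1 hp.2
  refine ⟨?_, ?_, exists_continuousLinearMap_integral_kernel_of_norm_le_mul hk hφ hφ hkφ⟩
  · rw [IntegrableOn, hvol]
    exact integrable_sq_of_norm_le_mul hk hφ hφ hkφ
  · rw [hvol, ← integral_congr_ae hφ_sq]
    calc √(∫ p, kε ε p.1 p.2 ^ 2 ∂μ.prod μ) ≤ √((∫ s, φ s ^ 2 ∂μ) * ∫ s, φ s ^ 2 ∂μ) :=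
          Real.sqrt_le_sqrt (integral_sq_le_of_norm_le_mul hφ hφ hkφ)
      _ = ∫ s, φ s ^ 2 ∂μ := Real.sqrt_mul_self (integral_nonneg fun _ => sq_nonneg _)
end
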